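/- Let l be an odd natural number and ω a real number. Then the limit as ε → 0⁺ of ∫₀¹ u^{ε − 1 + iω} P_l(u) du exists and equals (1/(1 + iω)) · ∏_{k=1}^{(l−1)/2} (ω + 2ki)/(ω − (2k+1)i). -/

import Mathlib

open MeasureTheory Filter

noncomputable section

/-- The Legendre polynomial of degree `l`, via Rodrigues' formula. -/
def legendre (l : ℕ) (u : ℝ) : ℝ :=
  (1 / (2 ^ l * (Nat.factorial l : ℝ))) *
    iteratedDeriv l (fun x : ℝ => (x ^ 2 - 1) ^ l) u

/-!
Integrating Rodrigues' formula by parts `l` times (the boundary terms vanish at `1` because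
`(u² - 1)^l` has a zero of order `l` there, and at `0` because `x > l`) reduces
`∫₀¹ u^(x-1) P_l(u) du` to a beta-type integral of `u^(x-l-1) (1 - u²)^l`, which gives
`∏_{i=1}^{l} (x - i) / ∏_{j=0}^{l} (x - l + 2j)` for real `x > l`. For odd `l = 2m + 1` the
factors `x - 1, x - 3, …, x - l` cancel, leaving a rational function that is holomorphic on
`Re s > -1`. The Mellin transform of `P_l` restricted to `(0, 1)` is holomorphic on `Re s > 0`,
so by the identity theorem it agrees there with this rational function, and the limit as
`ε → 0⁺` is the value of the rational function at `s = iω`.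
-/

open Polynomial Set intervalIntegral Topology

theorem Polynomial.iteratedDeriv_eval {𝕜 : Type*} [NontriviallyNormedField 𝕜] (p : 𝕜[X])
    (n : ℕ) :
    iteratedDeriv n (fun x => p.eval x) = fun x => (derivative^[n] p).eval x := by
  induction n with
  | zero => simp
  | succ n ih =>
    rw [iteratedDeriv_succ, ih, Function.iterate_succ_apply']
    funext x
    exact Polynomial.deriv _

theorem legendre_eq_eval (l : ℕ) (u : ℝ) :
    legendre l u
      = (2 ^ l * l.factorial : ℝ)⁻¹ * (derivative^[l] ((X ^ 2 - 1) ^ l : ℝ[X])).eval u := by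
  have h : (fun x : ℝ => (x ^ 2 - 1) ^ l) = fun x => ((X ^ 2 - 1) ^ l : ℝ[X]).eval x := by
    simp
  rw [legendre, h, Polynomial.iteratedDeriv_eval, one_div]

theorem continuous_legendre (l : ℕ) : Continuous (legendre l) := by
  simp_rw [funext (legendre_eq_eval l)]
  fun_prop

theorem integral_rpow_mul_derivative_eval {c : ℝ} (hc : 0 < c) {p : ℝ[X]} (hp : p.eval 1 = 0) :
    ∫ u in (0 : ℝ)..1, u ^ c * (derivative p).eval u
      = -c * ∫ u in (0 : ℝ)..1, u ^ (c - 1) * p.eval u := by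
  have hibp := integral_mul_deriv_eq_deriv_mul_of_hasDerivAt (a := 0) (b := 1)
    (u := fun u => u ^ c) (u' := fun u => c * u ^ (c - 1)) (v := fun u => p.eval u)
    (v' := fun u => (derivative p).eval u)
    (fun u _ => (Real.continuousAt_rpow_const u c (Or.inr hc.le)).continuousWithinAt)
    p.continuous.continuousOn
    (fun u hu => Real.hasDerivAt_rpow_const
      (Or.inl ((min_eq_left zero_le_one).symm.trans_lt hu.1).ne'))
    (fun u _ => p.hasDerivAt u)
    ((intervalIntegrable_rpow' (by linarith)).const_mul c)
    ((derivative p).continuous.intervalIntegrable _ _)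
  rw [hibp, hp, Real.zero_rpow hc.ne', neg_mul, ← intervalIntegral.integral_const_mul]
  simp only [mul_zero, zero_mul, sub_zero, zero_sub, mul_assoc]

theorem integral_rpow_mul_one_sub_sq_pow (n : ℕ) {a : ℝ} (ha : 0 < a) :
    ∫ u in (0 : ℝ)..1, u ^ (a - 1) * (1 - u ^ 2) ^ n
      = 2 ^ n * n.factorial / ∏ j ∈ Finset.range (n + 1), (a + 2 * j) := by
  induction n generalizing a with
  | zero =>
    rw [integral_congr (g := fun u => u ^ (a - 1)) (fun u _ => by simp),
      integral_rpow (Or.inl (by linarith))]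
    simp [Real.zero_rpow ha.ne']
  | succ n ih =>
    have hibp := integral_rpow_mul_derivative_eval ha (p := (1 - X ^ 2) ^ (n + 1)) (by simp)
    have hshift : ∀ u ∈ uIcc (0 : ℝ) 1, u ^ a * (derivative ((1 - X ^ 2) ^ (n + 1))).eval u
        = -(2 * (n + 1)) * (u ^ (a + 2 - 1) * (1 - u ^ 2) ^ n) := by
      intro u hu
      rw [uIcc_of_le zero_le_one] at hu
      rw [show a + 2 - 1 = a + 1 by ring, Real.rpow_add_one' hu.1 (by linarith)]
      simp only [derivative_pow, derivative_sub, derivative_one, derivative_X, eval_mul, eval_pow,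
        eval_sub, eval_one, eval_X, eval_C, zero_sub, add_tsub_cancel_right, eval_neg]
      push_cast
      ring
    rw [integral_congr hshift, intervalIntegral.integral_const_mul, ih (by linarith)] at hibp
    simp only [eval_pow, eval_sub, eval_one, eval_X] at hibp
    have hprod : ∏ j ∈ Finset.range (n + 1 + 1), (a + 2 * j)
        = a * ∏ j ∈ Finset.range (n + 1), (a + 2 + 2 * j) := by
      rw [Finset.prod_range_succ', mul_comm]
      push_cast
      simp only [mul_add, mul_one, mul_zero, add_zero, add_assoc, add_comm (2 : ℝ)]
    have hpos : 0 < ∏ j ∈ Finset.range (n + 1), (a + 2 + 2 * (j : ℝ)) :=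
      Finset.prod_pos fun j _ => by positivity
    rw [hprod, Nat.factorial_succ]
    push_cast
    field_simp at hibp ⊢
    linear_combination hibp

theorem integral_rpow_mul_iterate_derivative_eval {n : ℕ} {p : ℝ[X]} (hp : (X - C 1) ^ n ∣ p)
    {x : ℝ} (hx : n < x) :
    ∫ u in (0 : ℝ)..1, u ^ (x - 1) * (derivative^[n] p).eval u
      = (-1) ^ n * (∏ i ∈ Finset.range n, (x - 1 - i)) *
          ∫ u in (0 : ℝ)..1, u ^ (x - 1 - n) * p.eval u := by
  induction n generalizing p with
  | zero => simp
  | succ n ih =>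
    have hroot : p.eval 1 = 0 := by
      obtain ⟨q, rfl⟩ := hp
      simp
    have hdvd : (X - C 1) ^ n ∣ derivative p := by
      simpa using pow_sub_one_dvd_derivative_of_pow_dvd hp
    push_cast at hx
    rw [Function.iterate_succ_apply, ih hdvd (by linarith),
      integral_rpow_mul_derivative_eval (by linarith) hroot, Finset.prod_range_succ]
    push_cast
    ring_nf

theorem integral_rpow_mul_legendre (l : ℕ) {x : ℝ} (hx : l < x) :
    ∫ u in (0 : ℝ)..1, u ^ (x - 1) * legendre l u
      = (∏ i ∈ Finset.range l, (x - 1 - i)) /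
          ∏ j ∈ Finset.range (l + 1), (x - l + 2 * j) := by
  have hdvd : (X - C 1) ^ l ∣ ((X ^ 2 - 1) ^ l : ℝ[X]) :=
    pow_dvd_pow_of_dvd ⟨X + C 1, by simp only [map_one]; ring⟩ l
  have hsign : ∀ u ∈ uIcc (0 : ℝ) 1, u ^ (x - 1 - l) * ((X ^ 2 - 1) ^ l : ℝ[X]).eval u
      = (-1) ^ l * (u ^ (x - l - 1) * (1 - u ^ 2) ^ l) := by
    intro u _
    rw [sub_right_comm, eval_pow, eval_sub, eval_pow, eval_X, eval_one, ← neg_sub 1 (u ^ 2),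
      neg_pow]
    ring
  simp_rw [legendre_eq_eval, mul_left_comm _ (2 ^ l * l.factorial : ℝ)⁻¹]
  rw [intervalIntegral.integral_const_mul, integral_rpow_mul_iterate_derivative_eval hdvd hx,
    integral_congr hsign, intervalIntegral.integral_const_mul,
    integral_rpow_mul_one_sub_sq_pow l (sub_pos.2 hx)]
  have hpow : ((-1 : ℝ) ^ l) ^ 2 = 1 := by rw [← pow_mul, mul_comm, pow_mul]; simp
  have hden : ∏ j ∈ Finset.range (l + 1), (x - l + 2 * j) ≠ 0 :=
    Finset.prod_ne_zero_iff.2 fun j _ => by positivity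
  field_simp
  linear_combination (∏ i ∈ Finset.range l, (x - 1 - i)) * hpow

def oddLegendreMellin {K : Type*} [Field K] (m : ℕ) (s : K) : K :=
  (s + 1)⁻¹ * ∏ k ∈ Finset.Icc 1 m, (s - 2 * k) / (s + (2 * k + 1))

theorem prod_div_prod_eq_oddLegendreMellin (m : ℕ) {x : ℝ} (hx : 2 * m + 1 < x) :
    (∏ i ∈ Finset.range (2 * m + 1), (x - 1 - i)) /
        ∏ j ∈ Finset.range (2 * m + 1 + 1), (x - (2 * m + 1 : ℕ) + 2 * j)
      = oddLegendreMellin m x := by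
  induction m with
  | zero =>
    have h₁ : x - 1 ≠ 0 := by linarith
    simp only [Nat.zero_add, oddLegendreMellin, Finset.Icc_eq_empty_of_lt zero_lt_one,
      Finset.prod_empty, Finset.prod_range_succ, Finset.prod_range_zero, Nat.cast_zero,
      Nat.cast_one, one_mul, mul_one, mul_zero, add_zero, sub_zero]
    rw [div_mul_cancel_left₀ h₁]
    ring
  | succ m ih =>
    push_cast at hx
    have hnum : ∏ i ∈ Finset.range (2 * (m + 1) + 1), (x - 1 - i)
        = (∏ i ∈ Finset.range (2 * m + 1), (x - 1 - i)) *
            ((x - (2 * m + 3)) * (x - (2 * m + 2))) := by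
      rw [show 2 * (m + 1) + 1 = 2 * m + 1 + 1 + 1 by ring, Finset.prod_range_succ,
        Finset.prod_range_succ]
      push_cast
      ring
    have hden : ∏ j ∈ Finset.range (2 * (m + 1) + 1 + 1), (x - (2 * (m + 1) + 1 : ℕ) + 2 * j)
        = (∏ j ∈ Finset.range (2 * m + 1 + 1), (x - (2 * m + 1 : ℕ) + 2 * j)) *
            ((x - (2 * m + 3)) * (x + (2 * m + 3))) := by
      rw [show 2 * (m + 1) + 1 + 1 = 2 * m + 1 + 1 + 1 + 1 by ring, Finset.prod_range_succ',
        Finset.prod_range_succ,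
        Finset.prod_congr rfl fun j _ => show (x - (2 * (m + 1) + 1 : ℕ) + 2 * (j + 1 : ℕ))
          = x - (2 * m + 1 : ℕ) + 2 * j by push_cast; ring]
      push_cast
      ring
    have h₁ : x - (2 * m + 3) ≠ 0 := by linarith
    rw [hnum, hden, mul_div_mul_comm, ih (by linarith), mul_div_mul_left _ _ h₁,
      oddLegendreMellin, oddLegendreMellin, Finset.prod_Icc_succ_top (by omega), mul_assoc]
    push_cast
    ring_nf

theorem integral_rpow_mul_legendre_odd (m : ℕ) {x : ℝ} (hx : 2 * m + 1 < x) :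
    ∫ u in (0 : ℝ)..1, u ^ (x - 1) * legendre (2 * m + 1) u = oddLegendreMellin m x := by
  rw [integral_rpow_mul_legendre _ (by push_cast; exact hx),
    prod_div_prod_eq_oddLegendreMellin m hx]

theorem mellin_indicator_Ioo (f : ℝ → ℂ) (s : ℂ) :
    mellin ((Ioo 0 1).indicator f) s
      = ∫ u in Ioo (0 : ℝ) 1, Complex.exp ((s - 1) * Real.log u) * f u := by
  have hcpow : ∀ u : ℝ, (u : ℂ) ^ (s - 1) • (Ioo 0 1).indicator f u
      = (Ioo 0 1).indicator (fun u => Complex.exp ((s - 1) * Real.log u) * f u) u := by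
    intro u
    by_cases hu : u ∈ Ioo (0 : ℝ) 1
    · rw [indicator_of_mem hu, indicator_of_mem hu, smul_eq_mul,
        Complex.cpow_def_of_ne_zero (Complex.ofReal_ne_zero.2 hu.1.ne'),
        Complex.ofReal_log hu.1.le, mul_comm (Complex.log _)]
    · simp [indicator_of_notMem hu]
  rw [mellin, funext hcpow, setIntegral_indicator measurableSet_Ioo,
    inter_eq_self_of_subset_right Ioo_subset_Ioi_self]

theorem mellin_indicator_Ioo_ofReal (f : ℝ → ℝ) (x : ℝ) :
    mellin ((Ioo 0 1).indicator fun u => (f u : ℂ)) x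
      = ((∫ u in (0 : ℝ)..1, u ^ (x - 1) * f u : ℝ) : ℂ) := by
  have hreal : ∀ u ∈ Ioo (0 : ℝ) 1,
      Complex.exp ((x - 1) * Real.log u) * f u = ((u ^ (x - 1) * f u : ℝ) : ℂ) := by
    intro u hu
    rw [Complex.ofReal_mul, Complex.ofReal_cpow hu.1.le, Complex.cpow_def_of_ne_zero
      (Complex.ofReal_ne_zero.2 hu.1.ne'), Complex.ofReal_log hu.1.le, mul_comm (Complex.log _)]
    push_cast
    ring_nf
  rw [mellin_indicator_Ioo, setIntegral_congr_fun measurableSet_Ioo hreal,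
    integral_of_le zero_le_one, integral_Ioc_eq_integral_Ioo]
  exact integral_ofReal

theorem differentiableAt_mellin_indicator_Ioo {f : ℝ → ℂ} (hf : ContinuousOn f (Icc 0 1))
    {s : ℂ} (hs : 0 < s.re) : DifferentiableAt ℂ (mellin ((Ioo 0 1).indicator f)) s := by
  obtain ⟨M, hM⟩ := isCompact_Icc.exists_bound_of_continuousOn hf
  have hbound : ∀ t, ‖(Ioo 0 1).indicator f t‖ ≤ max M 0 := by
    intro t
    by_cases ht : t ∈ Ioo (0 : ℝ) 1
    · rw [indicator_of_mem ht]
      exact (hM t (Ioo_subset_Icc_self ht)).trans (le_max_left _ _)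
    · simp [indicator_of_notMem ht]
  have hint : IntegrableOn f (Ioo 0 1) := (hf.integrableOn_Icc).mono_set Ioo_subset_Icc_self
  refine mellin_differentiableAt_of_isBigO_rpow (a := s.re + 1) (b := 0)
    ((hint.integrable_indicator measurableSet_Ioo).locallyIntegrable.locallyIntegrableOn _)
    ?_ (by linarith) ?_ hs
  · refine EventuallyEq.trans_isBigO ?_ (Asymptotics.isBigO_zero _ _)
    filter_upwards [eventually_ge_atTop 1] with t ht
    exact indicator_of_notMem (fun h => h.2.not_ge ht) _
  · refine Asymptotics.IsBigO.of_bound (max M 0) (Eventually.of_forall fun t => ?_)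
    simpa using hbound t

theorem add_two_mul_natCast_add_one_ne_zero {s : ℂ} (hs : -1 < s.re) (k : ℕ) :
    s + (2 * k + 1) ≠ 0 := by
  intro h
  have hre := congrArg Complex.re h
  simp only [Complex.add_re, Complex.mul_re, Complex.re_ofNat, Complex.natCast_re,
    Complex.im_ofNat, Complex.natCast_im, Complex.one_re, Complex.zero_re] at hre
  linarith [(k.cast_nonneg : (0 : ℝ) ≤ k)]

theorem differentiableAt_oddLegendreMellin (m : ℕ) {s : ℂ} (hs : -1 < s.re) :
    DifferentiableAt ℂ (oddLegendreMellin m) s := by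
  have hs₀ : s + 1 ≠ 0 := by simpa using add_two_mul_natCast_add_one_ne_zero hs 0
  unfold oddLegendreMellin
  fun_prop (disch := first | exact hs₀ | exact add_two_mul_natCast_add_one_ne_zero hs _)

theorem eqOn_re_gt_of_eq_ofReal {f g : ℂ → ℂ} {a b : ℝ}
    (hf : DifferentiableOn ℂ f {s | b < s.re}) (hg : DifferentiableOn ℂ g {s | b < s.re})
    (hfg : ∀ x : ℝ, a < x → f x = g x) : EqOn f g {s | b < s.re} := by
  have hU : IsOpen {s : ℂ | b < s.re} := isOpen_lt continuous_const Complex.continuous_re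
  set x₀ := max a b + 1
  have hreal : Tendsto ((↑) : ℝ → ℂ) (𝓝[>] x₀) (𝓝[≠] (x₀ : ℂ)) :=
    tendsto_nhdsWithin_iff.2
      ⟨(Complex.continuous_ofReal.tendsto x₀).mono_left nhdsWithin_le_nhds,
      eventually_nhdsWithin_of_forall fun x hx => Complex.ofReal_injective.ne hx.ne'⟩
  refine (hf.analyticOnNhd hU).eqOn_of_preconnected_of_frequently_eq (hg.analyticOnNhd hU)
    (convex_halfSpace_re_gt b).isPreconnected (z₀ := (x₀ : ℂ)) ?_ (hreal.frequently ?_)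
  · show b < (x₀ : ℂ).re
    rw [Complex.ofReal_re]
    linarith [le_max_right a b]
  · refine (eventually_nhdsWithin_of_forall fun x (hx : x ∈ Ioi x₀) => hfg x ?_).frequently
    linarith [le_max_left a b, mem_Ioi.1 hx]

theorem mellin_legendre_odd (m : ℕ) {s : ℂ} (hs : 0 < s.re) :
    mellin ((Ioo 0 1).indicator fun u => (legendre (2 * m + 1) u : ℂ)) s
      = oddLegendreMellin m s := by
  refine eqOn_re_gt_of_eq_ofReal (a := 2 * m + 1) (fun s hs => ?_) (fun s hs => ?_) (fun x hx => ?_)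
    (show s ∈ {s : ℂ | 0 < s.re} from hs)
  · exact (differentiableAt_mellin_indicator_Ioo (Complex.continuous_ofReal.comp
      (continuous_legendre _)).continuousOn hs).differentiableWithinAt
  · exact (differentiableAt_oddLegendreMellin m (neg_one_lt_zero.trans hs)).differentiableWithinAt
  · rw [mellin_indicator_Ioo_ofReal, integral_rpow_mul_legendre_odd m hx]
    push_cast [oddLegendreMellin]
    rfl

theorem oddLegendreMellin_I_mul (m : ℕ) (ω : ℝ) :
    oddLegendreMellin m (Complex.I * ω) = 1 / (1 + Complex.I * ω) *
      ∏ k ∈ Finset.Icc 1 m, ((ω + 2 * k * Complex.I) / (ω - (2 * k + 1) * Complex.I)) := by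
  rw [oddLegendreMellin, one_div, add_comm 1]
  congr 1
  refine Finset.prod_congr rfl fun k _ => ?_
  have hnum : (ω : ℂ) + 2 * k * Complex.I = -Complex.I * (Complex.I * ω - 2 * k) := by
    linear_combination (ω : ℂ) * Complex.I_sq
  have hden : (ω : ℂ) - (2 * k + 1) * Complex.I
      = -Complex.I * (Complex.I * ω + (2 * k + 1)) := by
    linear_combination (ω : ℂ) * Complex.I_sq
  rw [hnum, hden, mul_div_mul_left _ _ (neg_ne_zero.2 Complex.I_ne_zero)]

theorem stmt6 (l : ℕ) (hl : Odd l) (ω : ℝ) :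
    Tendsto (fun ε : ℝ => ∫ u in Set.Ioo (0:ℝ) 1,
        Complex.exp (((ε : ℂ) - 1 + Complex.I * (ω : ℂ)) * (Real.log u : ℂ)) *
          (legendre l u : ℂ))
      (nhdsWithin 0 (Set.Ioi 0))
      (nhds ((1 / (1 + Complex.I * (ω : ℂ))) *
        ∏ k ∈ Finset.Icc 1 ((l - 1) / 2),
          (((ω : ℂ) + 2 * (k : ℂ) * Complex.I) /
            ((ω : ℂ) - (2 * (k : ℂ) + 1) * Complex.I)))) := by
  obtain ⟨m, rfl⟩ := hl
  rw [show (2 * m + 1 - 1) / 2 = m by omega, ← oddLegendreMellin_I_mul]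
  have hcont : ContinuousAt (oddLegendreMellin m) (((0 : ℝ) : ℂ) + Complex.I * ω) :=
    (differentiableAt_oddLegendreMellin m (by simp)).continuousAt
  have hshift : Continuous fun ε : ℝ => (ε : ℂ) + Complex.I * ω := by fun_prop
  have hlim := (hcont.tendsto.comp (hshift.tendsto 0)).mono_left (nhdsWithin_le_nhds (s := Ioi 0))
  rw [Complex.ofReal_zero, zero_add] at hlim
  refine hlim.congr' (eventually_nhdsWithin_of_forall fun ε (hε : 0 < ε) => ?_)
  rw [Function.comp_apply, ← mellin_legendre_odd m (by simpa using hε), mellin_indicator_Ioo]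
  ring_nf
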